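/- The negativity of the OQ is monotone under decoherence: for the channel E_s(ρ) = (1−s)ρ + s D(ρ), where D(ρ) = Σ_i A_i ρ A_i is full dephasing in the basis of the projective measurement {A_i} and s ∈ [0,1], one has N[q^OQ(E_s(ρ))] ≤ N[q^OQ(ρ)]. -/

import Mathlib

/-!
The `A i` are mutually orthogonal projections, so the dephased state `D ρ = ∑ i, A i * ρ * A i`
satisfies `A i * D ρ * A i = A i * ρ * A i`. Hence the correction term of `q^OQ` vanishes on
`D ρ`, and `q^OQ (D ρ)` has the nonnegative entries `Tr (A i ρ A i B f)`: its `ℓ¹` norm is its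
total mass `Tr ρ`, which is at most the `ℓ¹` norm of `q^OQ ρ`, a quasiprobability with the same
total mass. Since `q^OQ` is linear and the `ℓ¹` norm is convex, the negativity of
`(1 - s) ρ + s D ρ` is at most `(1 - s) N ρ + s N (D ρ) ≤ N ρ`.
-/

open Matrix ComplexOrder

/-- The operational quasiprobability as a function of the state. -/
noncomputable def qOQ (d : ℕ) (A B : Fin d → Matrix (Fin d) (Fin d) ℂ)
    (ρ : Matrix (Fin d) (Fin d) ℂ) (i f : Fin d) : ℂ :=
  (A i * ρ * A i * B f).trace +
    (1 / (d : ℂ)) * ((ρ * B f).trace - ∑ i', (A i' * ρ * A i' * B f).trace)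

/-- The negativity of the OQ of a state. -/
noncomputable def negOQ (d : ℕ) (A B : Fin d → Matrix (Fin d) (Fin d) ℂ)
    (ρ : Matrix (Fin d) (Fin d) ℂ) : ℝ :=
  (∑ i, ∑ f, ‖qOQ d A B ρ i f‖) - 1

theorem Complex.norm_sum_of_nonneg {ι : Type*} (s : Finset ι) {z : ι → ℂ}
    (hz : ∀ i ∈ s, 0 ≤ z i) : ‖∑ i ∈ s, z i‖ = ∑ i ∈ s, ‖z i‖ := by
  apply Complex.ofReal_injective
  rw [Complex.norm_of_nonneg' (Finset.sum_nonneg hz), Complex.ofReal_sum]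
  exact Finset.sum_congr rfl fun i hi => (Complex.norm_of_nonneg' (hz i hi)).symm

namespace Matrix

variable {ι n 𝕜 : Type*} [Fintype ι] [Fintype n] [RCLike 𝕜]

open scoped MatrixOrder in
theorem PosSemidef.trace_mul_nonneg {X Y : Matrix n n 𝕜} (hX : X.PosSemidef)
    (hY : Y.PosSemidef) : 0 ≤ (X * Y).trace := by
  classical
  obtain ⟨S, rfl⟩ := CStarAlgebra.nonneg_iff_eq_star_mul_self.mp hY.nonneg
  rw [star_eq_conjTranspose, ← Matrix.mul_assoc, trace_mul_cycle]
  exact (hX.mul_mul_conjTranspose_same S).trace_nonneg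

open scoped MatrixOrder in
/-- For `j ≠ i` the positive matrices `(P j * P i)ᴴ * (P j * P i) = P i * P j * P i` add up to
`P i * (1 - P i) * P i = 0`, so each of them vanishes. -/
theorem mul_eq_zero_of_sum_eq_one [DecidableEq n] {P : ι → Matrix n n 𝕜}
    (hherm : ∀ i, (P i).IsHermitian) (hidem : ∀ i, P i * P i = P i) (hsum : ∑ i, P i = 1)
    {i j : ι} (hij : j ≠ i) : P j * P i = 0 := by
  classical
  have hsq : ∀ k, (P k * P i)ᴴ * (P k * P i) = P i * P k * P i := fun k => by
    rw [conjTranspose_mul, (hherm i).eq, (hherm k).eq, Matrix.mul_assoc, ← Matrix.mul_assoc (P k),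
      hidem, Matrix.mul_assoc]
  have hzero : ∑ k ∈ Finset.univ.erase i, (P k * P i)ᴴ * (P k * P i) = 0 := by
    rw [Finset.sum_congr rfl fun k _ => hsq k, ← Finset.sum_mul, ← Finset.mul_sum,
      Finset.sum_erase_eq_sub (Finset.mem_univ i), hsum, Matrix.mul_sub, Matrix.mul_one, hidem,
      sub_self, Matrix.zero_mul]
  have hj := (Finset.sum_eq_zero_iff_of_nonneg fun k _ =>
    (posSemidef_conjTranspose_mul_self (P k * P i)).nonneg).mp hzero j (by simp [hij])
  exact conjTranspose_mul_self_eq_zero.mp hj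

def dephase (P : ι → Matrix n n 𝕜) (ρ : Matrix n n 𝕜) : Matrix n n 𝕜 :=
  ∑ i, P i * ρ * P i

variable {P : ι → Matrix n n 𝕜}

theorem trace_dephase [DecidableEq n] (hidem : ∀ i, P i * P i = P i) (hsum : ∑ i, P i = 1)
    (ρ : Matrix n n 𝕜) : (dephase P ρ).trace = ρ.trace := by
  simp only [dephase, trace_sum, fun i => trace_mul_cycle (P i) ρ (P i), hidem]
  rw [← trace_sum, ← Finset.sum_mul, hsum, Matrix.one_mul]

theorem mul_dephase_mul [DecidableEq n] (hherm : ∀ i, (P i).IsHermitian)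
    (hidem : ∀ i, P i * P i = P i) (hsum : ∑ i, P i = 1) (ρ : Matrix n n 𝕜) (k : ι) :
    P k * dephase P ρ * P k = P k * ρ * P k := by
  have hterm : ∀ j, P k * (P j * ρ * P j) * P k = (P k * P j) * ρ * (P j * P k) := fun j => by
    simp only [Matrix.mul_assoc]
  rw [dephase, Finset.mul_sum, Finset.sum_mul, Finset.sum_eq_single k]
  · rw [hterm, hidem]
  · intro j _ hjk
    rw [hterm, mul_eq_zero_of_sum_eq_one hherm hidem hsum hjk,
      mul_eq_zero_of_sum_eq_one hherm hidem hsum hjk.symm]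
    simp
  · simp

end Matrix

section OperationalQuasiprobability

variable {d : ℕ} {A B : Fin d → Matrix (Fin d) (Fin d) ℂ}

theorem qOQ_smul_add_smul (a b : ℂ) (ρ σ : Matrix (Fin d) (Fin d) ℂ) (i f : Fin d) :
    qOQ d A B (a • ρ + b • σ) i f = a * qOQ d A B ρ i f + b * qOQ d A B σ i f := by
  simp only [qOQ, Matrix.add_mul, Matrix.mul_add, Matrix.smul_mul, Matrix.mul_smul,
    trace_add, trace_smul, smul_eq_mul, Finset.sum_add_distrib, ← Finset.mul_sum]
  ring

theorem sum_qOQ (hBsum : ∑ f, B f = 1) (ρ : Matrix (Fin d) (Fin d) ℂ) :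
    ∑ i, ∑ f, qOQ d A B ρ i f = ρ.trace := by
  have hB : ∀ M : Matrix (Fin d) (Fin d) ℂ, ∑ f, (M * B f).trace = M.trace := fun M => by
    rw [← trace_sum, ← Finset.mul_sum, hBsum, Matrix.mul_one]
  rcases Nat.eq_zero_or_pos d with rfl | hd
  · simp [trace]
  have hd : (d : ℂ) ≠ 0 := Nat.cast_ne_zero.mpr hd.ne'
  simp only [qOQ, Finset.sum_add_distrib, ← Finset.mul_sum, Finset.sum_sub_distrib, hB,
    Finset.sum_comm (γ := Fin d) (f := fun f i' => (A i' * ρ * A i' * B f).trace),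
    Finset.sum_const, Finset.card_univ, Fintype.card_fin, nsmul_eq_mul]
  field_simp
  ring

theorem qOQ_dephase (hAherm : ∀ i, (A i).IsHermitian) (hAproj : ∀ i, A i * A i = A i)
    (hAsum : ∑ i, A i = 1) (ρ : Matrix (Fin d) (Fin d) ℂ) (i f : Fin d) :
    qOQ d A B (dephase A ρ) i f = (A i * ρ * A i * B f).trace := by
  simp only [qOQ, mul_dephase_mul hAherm hAproj hAsum]
  rw [← trace_sum, ← Finset.sum_mul, ← dephase, sub_self, mul_zero, add_zero]

theorem qOQ_dephase_nonneg (hAherm : ∀ i, (A i).IsHermitian) (hAproj : ∀ i, A i * A i = A i)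
    (hAsum : ∑ i, A i = 1) (hBpos : ∀ f, (B f).PosSemidef) {ρ : Matrix (Fin d) (Fin d) ℂ}
    (hρ : ρ.PosSemidef) (i f : Fin d) : 0 ≤ qOQ d A B (dephase A ρ) i f := by
  rw [qOQ_dephase hAherm hAproj hAsum]
  have hAρA : (A i * ρ * A i).PosSemidef := by
    simpa only [(hAherm i).eq] using hρ.mul_mul_conjTranspose_same (A i)
  exact hAρA.trace_mul_nonneg (hBpos f)

theorem negOQ_dephase_le (hAherm : ∀ i, (A i).IsHermitian) (hAproj : ∀ i, A i * A i = A i)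
    (hAsum : ∑ i, A i = 1) (hBpos : ∀ f, (B f).PosSemidef) (hBsum : ∑ f, B f = 1)
    {ρ : Matrix (Fin d) (Fin d) ℂ} (hρ : ρ.PosSemidef) :
    negOQ d A B (dephase A ρ) ≤ negOQ d A B ρ := by
  have hnonneg := qOQ_dephase_nonneg hAherm hAproj hAsum hBpos hρ
  have hdephase : ∑ i, ∑ f, ‖qOQ d A B (dephase A ρ) i f‖ = ‖ρ.trace‖ := by
    rw [← trace_dephase hAproj hAsum, ← sum_qOQ (A := A) hBsum,
      Complex.norm_sum_of_nonneg _ fun i _ => Finset.sum_nonneg fun f _ => hnonneg i f]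
    exact Finset.sum_congr rfl fun i _ =>
      (Complex.norm_sum_of_nonneg _ fun f _ => hnonneg i f).symm
  have hstate : ‖ρ.trace‖ ≤ ∑ i, ∑ f, ‖qOQ d A B ρ i f‖ := by
    rw [← sum_qOQ (A := A) hBsum]
    exact (norm_sum_le _ _).trans (Finset.sum_le_sum fun i _ => norm_sum_le _ _)
  rw [negOQ, negOQ, hdephase]
  linarith

theorem negOQ_convex_comb_le {s : ℝ} (hs0 : 0 ≤ s) (hs1 : s ≤ 1)
    (ρ σ : Matrix (Fin d) (Fin d) ℂ) :
    negOQ d A B (((1 - s : ℝ) : ℂ) • ρ + ((s : ℝ) : ℂ) • σ)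
      ≤ (1 - s) * negOQ d A B ρ + s * negOQ d A B σ := by
  have hpoint : ∀ i f, ‖qOQ d A B (((1 - s : ℝ) : ℂ) • ρ + ((s : ℝ) : ℂ) • σ) i f‖
      ≤ (1 - s) * ‖qOQ d A B ρ i f‖ + s * ‖qOQ d A B σ i f‖ := fun i f => by
    rw [qOQ_smul_add_smul]
    refine (norm_add_le _ _).trans_eq ?_
    rw [norm_mul, norm_mul, Complex.norm_of_nonneg (by linarith), Complex.norm_of_nonneg hs0]
  have hsum := Finset.sum_le_sum fun i (_ : i ∈ Finset.univ) =>
    Finset.sum_le_sum fun f (_ : f ∈ Finset.univ) => hpoint i f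
  simp only [Finset.sum_add_distrib, ← Finset.mul_sum] at hsum
  rw [negOQ, negOQ, negOQ]
  linarith

end OperationalQuasiprobability

theorem oq_negativity_decoherence_monotone_general (d : ℕ)
    (ρ : Matrix (Fin d) (Fin d) ℂ) (hρ : ρ.PosSemidef)
    (A : Fin d → Matrix (Fin d) (Fin d) ℂ)
    (hAherm : ∀ i, (A i).IsHermitian) (hAproj : ∀ i, A i * A i = A i)
    (hAsum : ∑ i, A i = 1)
    (B : Fin d → Matrix (Fin d) (Fin d) ℂ)
    (hBpos : ∀ f, (B f).PosSemidef) (hBsum : ∑ f, B f = 1)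
    (s : ℝ) (hs0 : 0 ≤ s) (hs1 : s ≤ 1) :
    negOQ d A B (((1 - s : ℝ) : ℂ) • ρ + ((s : ℝ) : ℂ) • ∑ i, A i * ρ * A i)
      ≤ negOQ d A B ρ := by
  have hdephase := negOQ_dephase_le hAherm hAproj hAsum hBpos hBsum hρ
  calc negOQ d A B (((1 - s : ℝ) : ℂ) • ρ + ((s : ℝ) : ℂ) • dephase A ρ)
      ≤ (1 - s) * negOQ d A B ρ + s * negOQ d A B (dephase A ρ) :=
        negOQ_convex_comb_le hs0 hs1 _ _
    _ ≤ (1 - s) * negOQ d A B ρ + s * negOQ d A B ρ := by gcongr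
    _ = negOQ d A B ρ := by ring

/-- The negativity of the OQ is monotone under the dephasing
channel `E_s(ρ) = (1−s)ρ + s Σ_i A_i ρ A_i`. -/
theorem oq_negativity_decoherence_monotone (d : ℕ) (hd : 0 < d)
    (ρ : Matrix (Fin d) (Fin d) ℂ) (hρ : ρ.PosSemidef) (hρtr : ρ.trace = 1)
    (A : Fin d → Matrix (Fin d) (Fin d) ℂ)
    (hAherm : ∀ i, (A i).IsHermitian) (hAproj : ∀ i, A i * A i = A i)
    (hAsum : ∑ i, A i = 1)
    (B : Fin d → Matrix (Fin d) (Fin d) ℂ)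
    (hBpos : ∀ f, (B f).PosSemidef) (hBsum : ∑ f, B f = 1)
    (s : ℝ) (hs0 : 0 ≤ s) (hs1 : s ≤ 1) :
    negOQ d A B (((1 - s : ℝ) : ℂ) • ρ + ((s : ℝ) : ℂ) • ∑ i, A i * ρ * A i)
      ≤ negOQ d A B ρ :=
  oq_negativity_decoherence_monotone_general d ρ hρ A hAherm hAproj hAsum B hBpos hBsum s hs0 hs1
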